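/- For every conjunctive query q over a schema R and every set Σ of TGDs over R in normal form, the optimal existential-join decomposition of q w.r.t. Σ is unique: there is exactly one existential-join decomposition of q w.r.t. Σ that is optimal. -/
import Mathlib


namespace OntDB

/-- Terms: constants, labeled nulls, and variables (each indexed by naturals). -/
inductive Term : Type
  | const : ℕ → Term
  | null  : ℕ → Term
  | var   : ℕ → Term
deriving DecidableEq

/-- a term is not a labeled null -/
def Term.noNull : Term → Prop
  | .null _ => False
  | _ => True

/-- Atoms: a predicate symbol applied to a list of argument terms. -/
structure Atom : Type where
  pred : ℕ
  args : List Term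
deriving DecidableEq

/-- A relational schema: a finite set of predicate symbols, each with an arity. -/
structure Schema : Type where
  preds : Finset ℕ
  ar : ℕ → ℕ

/-- arity(R) : the maximum arity over the predicates of R -/
def Schema.maxArity (R : Schema) : ℕ := R.preds.sup R.ar

def Atom.overSchema (R : Schema) (a : Atom) : Prop :=
  a.pred ∈ R.preds ∧ a.args.length = R.ar a.pred

/-- applying a substitution to an atom -/
def Atom.subst (h : Term → Term) (a : Atom) : Atom := ⟨a.pred, a.args.map h⟩

/-- a substitution fixes every constant -/
def constFix (h : Term → Term) : Prop := ∀ c, h (Term.const c) = Term.const c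

/-- A homomorphism from the set of atoms `A` to the set of atoms `A'`. -/
def IsHom (h : Term → Term) (A A' : Set Atom) : Prop :=
  constFix h ∧ ∀ a ∈ A, a.subst h ∈ A'

/-- the variables occurring in an atom -/
def Atom.vars (a : Atom) : Finset ℕ :=
  (a.args.filterMap (fun t => match t with | .var v => some v | _ => none)).toFinset

/-- the number of occurrences of the variable `v` in the atom `a` -/
def Atom.countVar (a : Atom) (v : ℕ) : ℕ := a.args.count (Term.var v)

/-- the variables occurring in a finite set of atoms -/
def varsOfSet (S : Finset Atom) : Finset ℕ := S.sup Atom.vars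

/-- A conjunctive query: a head atom together with a finite set of body atoms. -/
structure CQ : Type where
  head : Atom
  body : Finset Atom
deriving DecidableEq

/-- the variables occurring in a CQ (head and body) -/
def CQ.vars (q : CQ) : Finset ℕ := q.head.vars ∪ varsOfSet q.body

/-- the number of occurrences of the variable `v` in the CQ `q` (head and body) -/
def CQ.countVar (q : CQ) (v : ℕ) : ℕ := q.head.countVar v + ∑ a ∈ q.body, a.countVar v

/-- a variable is shared in `q` if it occurs more than once in `q` -/
def CQ.shared (q : CQ) (v : ℕ) : Prop := 2 ≤ q.countVar v

/-- a CQ over a schema: body atoms over the schema, and no labeled nulls occur -/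
def CQ.overSchema (R : Schema) (q : CQ) : Prop :=
  (∀ a ∈ q.body, a.overSchema R ∧ ∀ t ∈ a.args, t.noNull) ∧ ∀ t ∈ q.head.args, t.noNull

/-- a tuple of constants -/
def isConstTuple (t : List Term) : Prop := ∀ s ∈ t, ∃ c, s = Term.const c

/-- Evaluation of a CQ over an instance: the tuples of constants obtained as images
of the distinguished terms under homomorphisms of the body into the instance. -/
def CQ.eval (q : CQ) (I : Set Atom) : Set (List Term) :=
  { t | isConstTuple t ∧ ∃ h : Term → Term, IsHom h ↑q.body I ∧ q.head.args.map h = t }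

/-- evaluation of a (possibly infinite) union of CQs -/
def ucqEval (Q : Set CQ) (I : Set Atom) : Set (List Term) := ⋃ q ∈ Q, q.eval I

/-- A TGD (in normal form representation): a finite set of body atoms plus a single
head atom; the existentially quantified variables are exactly the head variables
that do not occur in the body. -/
structure TGD : Type where
  body : Finset Atom
  head : Atom
deriving DecidableEq

/-- the universally quantified variables occurring in the head -/
def TGD.frontier (σ : TGD) : Finset ℕ := varsOfSet σ.body ∩ σ.head.vars

/-- the existentially quantified variables -/
def TGD.exVars (σ : TGD) : Finset ℕ := σ.head.vars \ varsOfSet σ.body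

def TGD.vars (σ : TGD) : Finset ℕ := varsOfSet σ.body ∪ σ.head.vars

/-- normal form: at most one existentially quantified variable, occurring once -/
def TGD.NormalForm (σ : TGD) : Prop :=
  σ.exVars.card ≤ 1 ∧ ∀ v ∈ σ.exVars, σ.head.countVar v = 1

/-- a TGD is linear if its body consists of a single atom -/
def TGD.Linear (σ : TGD) : Prop := σ.body.card = 1

/-- a set of TGDs is linear if all its members are -/
def LinearSet (Sig : Finset TGD) : Prop := ∀ σ ∈ Sig, σ.Linear

def TGD.overSchema (R : Schema) (σ : TGD) : Prop :=
  σ.body.Nonempty ∧ (∀ a ∈ σ.body, a.overSchema R ∧ ∀ t ∈ a.args, t.noNull) ∧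
  σ.head.overSchema R ∧ ∀ t ∈ σ.head.args, t.noNull

/-- satisfaction of a TGD by an instance -/
def TGD.sat (σ : TGD) (I : Set Atom) : Prop :=
  ∀ h : Term → Term, IsHom h ↑σ.body I →
    ∃ h' : Term → Term, constFix h' ∧
      (∀ v ∈ σ.frontier, h' (Term.var v) = h (Term.var v)) ∧ σ.head.subst h' ∈ I

/-- satisfaction of a set of TGDs -/
def satSet (Sig : Finset TGD) (I : Set Atom) : Prop := ∀ σ ∈ Sig, σ.sat I

/-- a database for a schema: a finite set of atoms over the schema whose
arguments are constants -/
def IsDatabase (R : Schema) (D : Finset Atom) : Prop :=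
  ∀ a ∈ D, a.overSchema R ∧ ∀ t ∈ a.args, ∃ c, t = Term.const c

/-- the certain answers of a CQ w.r.t. a database and a set of TGDs -/
def certAns (q : CQ) (D : Finset Atom) (Sig : Finset TGD) : Set (List Term) :=
  { t | ∀ I : Set Atom, ↑D ⊆ I → satSet Sig I → t ∈ q.eval I }

/-- the certain answers of a (possibly infinite) union of CQs -/
def certAnsUCQ (Q : Set CQ) (D : Finset Atom) (Sig : Finset TGD) : Set (List Term) :=
  { t | ∀ I : Set Atom, ↑D ⊆ I → satSet Sig I → t ∈ ucqEval Q I }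

/-- a unifier for a finite set of atoms -/
def IsUnifier (γ : Term → Term) (S : Finset Atom) : Prop :=
  constFix γ ∧ ∀ a ∈ S, ∀ b ∈ S, a.subst γ = b.subst γ

def Unifies (S : Finset Atom) : Prop := ∃ γ, IsUnifier γ S

/-- most general unifier -/
def IsMGU (γ : Term → Term) (S : Finset Atom) : Prop :=
  IsUnifier γ S ∧ ∀ γ', IsUnifier γ' S → ∃ δ : Term → Term, ∀ t, γ' t = δ (γ t)

/-- `i` is the position of the existentially quantified variable in head(σ) -/
def TGD.exPos (σ : TGD) (i : ℕ) : Prop :=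
  ∃ z ∈ σ.exVars, σ.head.args[i]? = some (Term.var z)

/-- applicability of the TGD σ to the set S ⊆ body(q) -/
def Applicable (q : CQ) (σ : TGD) (S : Finset Atom) : Prop :=
  S.Nonempty ∧ S ⊆ q.body ∧ Unifies (S ∪ {σ.head}) ∧
  ∀ a ∈ S, ∀ i, σ.exPos i →
    (∀ c, a.args[i]? ≠ some (Term.const c)) ∧
    ∀ v, a.args[i]? = some (Term.var v) → ¬ q.shared v

/-- factorizability of the set S ⊆ body(q) w.r.t. the TGD σ -/
def Factorizable (q : CQ) (σ : TGD) (S : Finset Atom) : Prop :=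
  S ⊆ q.body ∧ 2 ≤ S.card ∧ Unifies S ∧ (∃ i, σ.exPos i) ∧
  ∃ V : ℕ, V ∉ varsOfSet (q.body \ S) ∧
    ∀ a ∈ S, (∃ i, σ.exPos i ∧ a.args[i]? = some (Term.var V)) ∧
      ∀ j, a.args[j]? = some (Term.var V) → σ.exPos j

/-- renaming of variables -/
def renT (ρ : ℕ → ℕ) : Term → Term
  | .var v => .var (ρ v)
  | t => t

/-- renaming the variables of a TGD -/
def TGD.rename (σ : TGD) (ρ : ℕ → ℕ) : TGD :=
  ⟨σ.body.image (Atom.subst (renT ρ)), σ.head.subst (renT ρ)⟩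

/-- applying a substitution to a CQ -/
def CQ.subst (q : CQ) (γ : Term → Term) : CQ :=
  ⟨q.head.subst γ, q.body.image (Atom.subst γ)⟩

/-- the restriction on MGUs used by XRewrite under sticky sets of TGDs:
every variable of the protected set `W` (the variables of the input query) is
mapped to a variable of `W` (or to a constant).  For `W = ∅` no restriction. -/
def ProtectsVars (W : Finset ℕ) (γ : Term → Term) : Prop :=
  ∀ v ∈ W, (∃ u ∈ W, γ (Term.var v) = Term.var u) ∨ ∃ c, γ (Term.var v) = Term.const c

/-- the substitution is the identity on all variables outside `V` -/
def IdOutside (V : Finset ℕ) (γ : Term → Term) : Prop :=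
  ∀ v, v ∉ V → γ (Term.var v) = Term.var v

/-- one rewriting step of XRewrite (applied to `q`, producing `q'`) -/
def IsRewriteStep (Sig : Finset TGD) (W : Finset ℕ) (q q' : CQ) : Prop :=
  ∃ σ ∈ Sig, ∃ ρ : ℕ → ℕ, Function.Injective ρ ∧ (∀ v, ρ v ∉ q.vars) ∧
    ∃ S : Finset Atom, Applicable q (σ.rename ρ) S ∧
      ∃ γ : Term → Term, IsMGU γ (S ∪ {(σ.rename ρ).head}) ∧
        IdOutside (varsOfSet (S ∪ {(σ.rename ρ).head})) γ ∧ ProtectsVars W γ ∧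
        q' = (CQ.mk q.head ((q.body \ S) ∪ (σ.rename ρ).body)).subst γ

/-- one factorization step of XRewrite -/
def IsFactStep (Sig : Finset TGD) (W : Finset ℕ) (q q' : CQ) : Prop :=
  ∃ σ ∈ Sig, ∃ S : Finset Atom, Factorizable q σ S ∧
    ∃ γ : Term → Term, IsMGU γ S ∧ IdOutside (varsOfSet S) γ ∧ ProtectsVars W γ ∧
      q' = q.subst γ

/-- the CQs obtainable from q by a finite sequence of rewriting and
factorization steps -/
inductive Reach (Sig : Finset TGD) (W : Finset ℕ) (q : CQ) : CQ → Prop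
  | refl : Reach Sig W q q
  | rw {p p' : CQ} : Reach Sig W q p → IsRewriteStep Sig W p p' → Reach Sig W q p'
  | fact {p p' : CQ} : Reach Sig W q p → IsFactStep Sig W p p' → Reach Sig W q p'

/-- the output of XRewrite(q,Σ): q together with all CQs obtainable from q by a
finite sequence of rewriting and factorization steps whose last step is a
rewriting step -/
def XRewriteOut (Sig : Finset TGD) (W : Finset ℕ) (q : CQ) : Set CQ :=
  {q} ∪ { p' | ∃ p : CQ, Reach Sig W q p ∧ IsRewriteStep Sig W p p' }

/-- two CQs are the same up to bijective variable renaming -/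
def CQEquiv (p p' : CQ) : Prop :=
  ∃ ρ : ℕ → ℕ, Function.Bijective ρ ∧ p.subst (renT ρ) = p'

/-- the SMarking procedure: `Marked Sig σ v` says that the body variable `v` of
σ gets marked -/
inductive Marked (Sig : Finset TGD) : TGD → ℕ → Prop
  | init {σ : TGD} {v : ℕ} : σ ∈ Sig → v ∈ varsOfSet σ.body → v ∉ σ.head.vars →
      Marked Sig σ v
  | prop {σ σ' : TGD} {v : ℕ} (b : Atom) (u : ℕ → ℕ) : σ ∈ Sig → σ' ∈ Sig →
      v ∈ varsOfSet σ.body → v ∈ σ.head.vars → b ∈ σ'.body →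
      (∀ i : ℕ, σ.head.args[i]? = some (Term.var v) →
        b.args[i]? = some (Term.var (u i))) →
      (∀ i : ℕ, σ.head.args[i]? = some (Term.var v) → Marked Sig σ' (u i)) →
      Marked Sig σ v

/-- a set of TGDs is sticky if every marked variable occurs only once in the
body of its TGD -/
def Sticky (Sig : Finset TGD) : Prop :=
  ∀ σ ∈ Sig, ∀ v : ℕ, Marked Sig σ v → (∑ a ∈ σ.body, a.countVar v) = 1

/- ## Propagation graph and atom coverage -/

/-- a position of a schema: a predicate together with an argument index -/
abbrev Pos := ℕ × ℕ

/-- the edges of the propagation graph -/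
def PGEdge (σ : TGD) (pb ph : Pos) : Prop :=
  ∃ b ∈ σ.body, ∃ v : ℕ,
    b.pred = pb.1 ∧ b.args[pb.2]? = some (Term.var v) ∧
    σ.head.pred = ph.1 ∧ σ.head.args[ph.2]? = some (Term.var v)

/-- `vs` is a path in the propagation graph of Σ with edge labels `ls` -/
def IsPath (Sig : Finset TGD) (vs : List Pos) (ls : List TGD) : Prop :=
  vs.length = ls.length + 1 ∧
  ∀ j < ls.length, ∃ σ pb ph,
    ls[j]? = some σ ∧ vs[j]? = some pb ∧ vs[j + 1]? = some ph ∧ σ ∈ Sig ∧ PGEdge σ pb ph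

/-- a minimal path: no cycle is traversed twice consecutively -/
def MinimalPath (Sig : Finset TGD) (vs : List Pos) (ls : List TGD) : Prop :=
  IsPath Sig vs ls ∧
  ¬ ∃ i j : ℕ, 0 < i ∧ i + 1 < vs.length ∧ 0 < j ∧ j ≤ i ∧ i + j < vs.length ∧
      (∀ k ≤ j, vs[i - j + k]? = vs[i + k]?) ∧ ∀ k < j, ls[i - j + k]? = ls[i + k]?

/-- a tight sequence of (linear) TGDs -/
def TightSeq (σs : List TGD) : Prop :=
  ∀ j, j + 1 < σs.length →
    ∃ σ1 σ2, σs[j]? = some σ1 ∧ σs[j + 1]? = some σ2 ∧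
      ∃ h : Term → Term, constFix h ∧ σ2.body.image (Atom.subst h) = {σ1.head}

/-- a sequence of TGDs compatible to an atom -/
def CompatibleTo (σs : List TGD) (a : Atom) : Prop :=
  ∃ σ1, σs[0]? = some σ1 ∧ ∃ h : Term → Term, constFix h ∧
    σ1.body.image (Atom.subst h) = {a}

/-- pos(a,t): the positions (indices) at which the term t occurs in the atom a -/
def atomPos (a : Atom) (t : Term) : Set ℕ := { i | a.args[i]? = some t }

/-- T(q,a): the constants of a together with the variables of a shared in q -/
def Tq (q : CQ) (a : Atom) : Set Term :=
  { t | t ∈ a.args ∧ ((∃ c, t = Term.const c) ∨ ∃ v, t = Term.var v ∧ q.shared v) }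

/-- atom coverage: a covers b w.r.t. q and Σ -/
def Covers (Sig : Finset TGD) (q : CQ) (a b : Atom) : Prop :=
  (∀ t ∈ Tq q b, t ∈ a.args) ∧
  ∃ σs : List TGD, σs ≠ [] ∧ (∀ σ ∈ σs, σ ∈ Sig) ∧ TightSeq σs ∧ CompatibleTo σs a ∧
    ∀ t ∈ Tq q b, ∀ i ∈ atomPos b t,
      ∃ vs : List Pos, MinimalPath Sig vs σs ∧
        (∃ p0 : Pos, vs[0]? = some p0 ∧ p0.1 = a.pred ∧ p0.2 ∈ atomPos a t) ∧
        vs[vs.length - 1]? = some (b.pred, i)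


/-- the affected positions of the schema w.r.t. the pair ⟨σ,Σ⟩ -/
inductive AffectedPos (Sig : Finset TGD) (σ : TGD) : Pos → Prop
  | base {i : ℕ} : σ.exPos i → AffectedPos Sig σ (σ.head.pred, i)
  | step {σ' : TGD} {i v : ℕ} : σ' ∈ Sig →
      σ'.head.args[i]? = some (Term.var v) → v ∈ varsOfSet σ'.body →
      (∀ b ∈ σ'.body, ∀ j : ℕ, b.args[j]? = some (Term.var v) →
        AffectedPos Sig σ (b.pred, j)) →
      AffectedPos Sig σ (σ'.head.pred, i)

/-- the variable v occurs in body(q) only at positions affected w.r.t. ⟨σ,Σ⟩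
for some σ ∈ Σ -/
def OnlyAffectedVar (Sig : Finset TGD) (q : CQ) (v : ℕ) : Prop :=
  ∃ σ ∈ Sig, ∀ a ∈ q.body, ∀ j : ℕ, a.args[j]? = some (Term.var v) →
    AffectedPos Sig σ (a.pred, j)

/-- an existential-join decomposition of q w.r.t. Σ: a partition of body(q) such
that every variable occurring only at affected positions lies in a single block -/
def ExJoinDecomp (Sig : Finset TGD) (q : CQ) (P : Finset (Finset Atom)) : Prop :=
  (∀ S ∈ P, S.Nonempty) ∧ (∀ S ∈ P, S ⊆ q.body) ∧
  (∀ a ∈ q.body, ∃! S : Finset Atom, S ∈ P ∧ a ∈ S) ∧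
  ∀ v ∈ varsOfSet q.body, OnlyAffectedVar Sig q v →
    ∃ S ∈ P, v ∈ varsOfSet S ∧ ∀ S' ∈ P, S' ≠ S → v ∉ varsOfSet S'

/-- an optimal existential-join decomposition: no block can be split -/
def OptimalDecomp (Sig : Finset TGD) (q : CQ) (P : Finset (Finset Atom)) : Prop :=
  ExJoinDecomp Sig q P ∧
  ¬ ∃ S ∈ P, ∃ S₁ S₂ : Finset Atom, S₁.Nonempty ∧ S₂.Nonempty ∧
      Disjoint S₁ S₂ ∧ S₁ ∪ S₂ = S ∧
      ExJoinDecomp Sig q (P.erase S ∪ {S₁, S₂})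

/-- two atoms share an only-affected variable -/
def SharesOA (Sig : Finset TGD) (q : CQ) (a b : Atom) : Prop :=
  b ∈ q.body ∧ ∃ v, OnlyAffectedVar Sig q v ∧ v ∈ varsOfSet q.body ∧
    v ∈ a.vars ∧ v ∈ b.vars

/-- connectivity via only-affected variables -/
def Conn (Sig : Finset TGD) (q : CQ) (a b : Atom) : Prop :=
  Relation.ReflTransGen (SharesOA Sig q) a b

/-- the connected component of an atom inside body(q) -/
noncomputable def compOf (Sig : Finset TGD) (q : CQ) (a : Atom) : Finset Atom :=
  @Finset.filter _ (Conn Sig q a) (Classical.decPred _) q.body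

lemma mem_compOf {Sig : Finset TGD} {q : CQ} {a b : Atom} :
    b ∈ compOf Sig q a ↔ b ∈ q.body ∧ Conn Sig q a b := by
  simp [compOf, Finset.mem_filter]

lemma mem_varsOfSet {S : Finset Atom} {v : ℕ} :
    v ∈ varsOfSet S ↔ ∃ a ∈ S, v ∈ a.vars := by
  simp [varsOfSet, Finset.mem_sup]

/-- any block of an existential-join decomposition is closed under Conn -/
lemma block_closed {Sig : Finset TGD} {q : CQ} {P : Finset (Finset Atom)}
    (hP : ExJoinDecomp Sig q P) {S : Finset Atom} {a b : Atom} (hS : S ∈ P)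
    (ha : a ∈ S) (h : Conn Sig q a b) : b ∈ S := by
  induction h with
  | refl => exact ha
  | tail _ hstep ih =>
    obtain ⟨hb, v, hoa, hvb, hvc, hvd⟩ := hstep
    obtain ⟨T, hT, hvT, huniq⟩ := hP.2.2.2 v hvb hoa
    have hvS : v ∈ varsOfSet S := mem_varsOfSet.mpr ⟨_, ih, hvc⟩
    have hST : S = T := by
      by_contra hne
      exact huniq S hS hne hvS
    obtain ⟨S', ⟨hS', hbS'⟩, _⟩ := hP.2.2.1 _ hb
    have hvS' : v ∈ varsOfSet S' := mem_varsOfSet.mpr ⟨_, hbS', hvd⟩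
    have hS'T : S' = T := by
      by_contra hne
      exact huniq S' hS' hne hvS'
    rw [hST, ← hS'T]
    exact hbS'

/-- in an optimal decomposition, every block is a connected component -/
lemma optimal_block {Sig : Finset TGD} {q : CQ} {P : Finset (Finset Atom)}
    (hP : OptimalDecomp Sig q P) {S : Finset Atom} {a : Atom} (hS : S ∈ P)
    (ha : a ∈ S) : S = compOf Sig q a := by
  have hSbody : S ⊆ q.body := hP.1.2.1 S hS
  have hsub : compOf Sig q a ⊆ S := fun b hb =>
    block_closed hP.1 hS ha (mem_compOf.mp hb).2
  refine Finset.Subset.antisymm ?_ hsub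
  by_contra hns
  obtain ⟨b, hbS, hbc⟩ := Finset.not_subset.mp hns
  set S₁ := compOf Sig q a with hS₁def
  set S₂ := S \ S₁ with hS₂def
  have haS₁ : a ∈ S₁ := mem_compOf.mpr ⟨hSbody ha, Relation.ReflTransGen.refl⟩
  have hbS₂ : b ∈ S₂ := Finset.mem_sdiff.mpr ⟨hbS, hbc⟩
  have hdisj : Disjoint S₁ S₂ := Finset.disjoint_sdiff
  have hunion : S₁ ∪ S₂ = S := Finset.union_sdiff_of_subset hsub
  have hS₁S : S₁ ⊆ S := hsub
  have hS₂S : S₂ ⊆ S := Finset.sdiff_subset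
  -- the split is still a decomposition, contradicting optimality
  apply hP.2
  refine ⟨S, hS, S₁, S₂, ⟨a, haS₁⟩, ⟨b, hbS₂⟩, hdisj, hunion, ?_⟩
  set P' := P.erase S ∪ {S₁, S₂} with hP'def
  have hmem' : ∀ T : Finset Atom, T ∈ P' ↔ (T ∈ P ∧ T ≠ S) ∨ T = S₁ ∨ T = S₂ := by
    intro T
    simp only [hP'def, Finset.mem_union, Finset.mem_erase, Finset.mem_insert,
      Finset.mem_singleton]
    tauto
  refine ⟨?_, ?_, ?_, ?_⟩
  · intro T hT
    rcases (hmem' T).mp hT with ⟨hTP, _⟩ | rfl | rfl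
    · exact hP.1.1 T hTP
    · exact ⟨a, haS₁⟩
    · exact ⟨b, hbS₂⟩
  · intro T hT
    rcases (hmem' T).mp hT with ⟨hTP, _⟩ | rfl | rfl
    · exact hP.1.2.1 T hTP
    · exact hS₁S.trans hSbody
    · exact hS₂S.trans hSbody
  · -- each atom lies in a unique block of P'
    intro c hc
    obtain ⟨T, ⟨hT, hcT⟩, huT⟩ := hP.1.2.2.1 c hc
    by_cases hTS : T = S
    · subst hTS
      by_cases hc1 : c ∈ S₁
      · refine ⟨S₁, ⟨(hmem' S₁).mpr (Or.inr (Or.inl rfl)), hc1⟩, ?_⟩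
        rintro T' ⟨hT', hcT'⟩
        rcases (hmem' T').mp hT' with ⟨hT'P, hT'ne⟩ | rfl | rfl
        · exact absurd (huT T' ⟨hT'P, hcT'⟩) hT'ne
        · rfl
        · exact absurd hc1 (fun h => (Finset.disjoint_left.mp hdisj h) hcT')
      · have hc2 : c ∈ S₂ := by
          have : c ∈ S₁ ∪ S₂ := hunion ▸ hcT
          rcases Finset.mem_union.mp this with h | h
          · exact absurd h hc1
          · exact h
        refine ⟨S₂, ⟨(hmem' S₂).mpr (Or.inr (Or.inr rfl)), hc2⟩, ?_⟩
        rintro T' ⟨hT', hcT'⟩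
        rcases (hmem' T').mp hT' with ⟨hT'P, hT'ne⟩ | rfl | rfl
        · exact absurd (huT T' ⟨hT'P, hcT'⟩) hT'ne
        · exact absurd hcT' hc1
        · rfl
    · refine ⟨T, ⟨(hmem' T).mpr (Or.inl ⟨hT, hTS⟩), hcT⟩, ?_⟩
      rintro T' ⟨hT', hcT'⟩
      rcases (hmem' T').mp hT' with ⟨hT'P, _⟩ | rfl | rfl
      · exact huT T' ⟨hT'P, hcT'⟩
      · exact absurd (huT S ⟨hS, hS₁S hcT'⟩).symm hTS
      · exact absurd (huT S ⟨hS, hS₂S hcT'⟩).symm hTS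
  · -- only-affected variables lie in a single block of P'
    intro v hv hoa
    obtain ⟨T, hT, hvT, huniq⟩ := hP.1.2.2.2 v hv hoa
    by_cases hTS : T = S
    · subst hTS
      by_cases hv1 : v ∈ varsOfSet S₁
      · refine ⟨S₁, (hmem' S₁).mpr (Or.inr (Or.inl rfl)), hv1, ?_⟩
        intro T' hT' hne
        rcases (hmem' T').mp hT' with ⟨hT'P, hT'ne⟩ | rfl | rfl
        · exact huniq T' hT'P hT'ne
        · exact absurd rfl hne
        · -- v cannot occur in S₂: atoms with v are connected to S₁
          intro hv2
          obtain ⟨d, hd1, hvd⟩ := mem_varsOfSet.mp hv1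
          obtain ⟨e, he2, hve⟩ := mem_varsOfSet.mp hv2
          have heS : e ∈ q.body := hSbody (hS₂S he2)
          have hconn : Conn Sig q a e :=
            Relation.ReflTransGen.tail (mem_compOf.mp hd1).2
              ⟨heS, v, hoa, hv, hvd, hve⟩
          have : e ∈ S₁ := mem_compOf.mpr ⟨heS, hconn⟩
          exact (Finset.disjoint_left.mp hdisj this) he2
      · have hv2 : v ∈ varsOfSet S₂ := by
          obtain ⟨c, hcS, hvc⟩ := mem_varsOfSet.mp hvT
          have hc2 : c ∈ S₂ := by
            have : c ∈ S₁ ∪ S₂ := hunion ▸ hcS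
            rcases Finset.mem_union.mp this with h | h
            · exact absurd (mem_varsOfSet.mpr ⟨c, h, hvc⟩) hv1
            · exact h
          exact mem_varsOfSet.mpr ⟨c, hc2, hvc⟩
        refine ⟨S₂, (hmem' S₂).mpr (Or.inr (Or.inr rfl)), hv2, ?_⟩
        intro T' hT' hne
        rcases (hmem' T').mp hT' with ⟨hT'P, hT'ne⟩ | rfl | rfl
        · exact huniq T' hT'P hT'ne
        · exact hv1
        · exact absurd rfl hne
    · have hvnS : v ∉ varsOfSet S := huniq S hS (fun h => hTS h.symm)
      refine ⟨T, (hmem' T).mpr (Or.inl ⟨hT, hTS⟩), hvT, ?_⟩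
      intro T' hT' hne
      rcases (hmem' T').mp hT' with ⟨hT'P, _⟩ | rfl | rfl
      · exact huniq T' hT'P hne
      · intro hvv
        obtain ⟨c, hc, hvc⟩ := mem_varsOfSet.mp hvv
        exact hvnS (mem_varsOfSet.mpr ⟨c, hS₁S hc, hvc⟩)
      · intro hvv
        obtain ⟨c, hc, hvc⟩ := mem_varsOfSet.mp hvv
        exact hvnS (mem_varsOfSet.mpr ⟨c, hS₂S hc, hvc⟩)

lemma optimal_subset {Sig : Finset TGD} {q : CQ} {P₁ P₂ : Finset (Finset Atom)}
    (h₁ : OptimalDecomp Sig q P₁) (h₂ : OptimalDecomp Sig q P₂) : P₁ ⊆ P₂ := by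
  intro S hS
  obtain ⟨a, ha⟩ := h₁.1.1 S hS
  have habody : a ∈ q.body := h₁.1.2.1 S hS ha
  obtain ⟨T, ⟨hT, haT⟩, _⟩ := h₂.1.2.2.1 a habody
  have e1 : S = compOf Sig q a := optimal_block h₁ hS ha
  have e2 : T = compOf Sig q a := optimal_block h₂ hT haT
  rw [e1, ← e2]
  exact hT

/-- the optimal existential-join decomposition of a CQ w.r.t. a
set of TGDs is unique. -/
theorem optimal_decomposition_unique
    (R : Schema) (Sig : Finset TGD) (q : CQ)
    (hq : q.overSchema R)
    (hover : ∀ σ ∈ Sig, σ.overSchema R) (hnf : ∀ σ ∈ Sig, σ.NormalForm) :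
    ∀ P₁ P₂ : Finset (Finset Atom),
      OptimalDecomp Sig q P₁ → OptimalDecomp Sig q P₂ → P₁ = P₂ := by
  intro P₁ P₂ h₁ h₂
  exact Finset.Subset.antisymm (optimal_subset h₁ h₂) (optimal_subset h₂ h₁)

end OntDB
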